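/- arXiv:1906.09892 — 2 statements merged into one kernel-verified Lean document; each statement's English description precedes it below -/
import Mathlib

section
/- For all nonnegative integers n, p_8(2n+1) ≡ 0 (mod 8). -/
/-- `f k = ∏_{j≥1} (1 - q^{k j})` as a formal power series over ℤ; the `n`-th
coefficient is computed from the (finite) product of the factors of degree `≤ n+1`,
which agrees with the infinite product. -/
noncomputable def f (k : ℕ) : PowerSeries ℤ :=
  PowerSeries.mk fun n =>
    PowerSeries.coeff (R := ℤ) n (∏ j ∈ Finset.range (n + 1), (1 - PowerSeries.X ^ (k * (j + 1))))

/-- `p8 n` is the number of 8-colour partitions of `n`, i.e. the `n`-th coefficient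
of `1 / f_1^8`. -/
noncomputable def p8 (n : ℕ) : ℤ := PowerSeries.coeff (R := ℤ) n (Ring.inverse (f 1 ^ 8))

/-!
Squaring is additive modulo 2, so `f₁² ≡ f₂ (mod 2)`, and raising to the fourth power
upgrades this to `f₁⁸ ≡ f₂⁴ (mod 8)`. Hence `1/f₁⁸ ≡ 1/f₂⁴ (mod 8)`, and `1/f₂⁴` is a
series in `q²`, so its odd coefficients vanish.
-/

open PowerSeries
open scoped Ring

theorem map_ringInverse {M₀ N₀ F : Type*} [MonoidWithZero M₀] [MonoidWithZero N₀] [FunLike F M₀ N₀]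
    [MonoidHomClass F M₀ N₀] (φ : F) {a : M₀} (ha : IsUnit a) : φ a⁻¹ʳ = (φ a)⁻¹ʳ := by
  obtain ⟨u, rfl⟩ := ha
  rw [Ring.inverse_unit]
  change φ ↑u⁻¹ = ((Units.map (φ : M₀ →* N₀) u : N₀ˣ) : N₀)⁻¹ʳ
  rw [Ring.inverse_unit]
  rfl

theorem dvd_prod_sub_prod {ι R : Type*} [CommRing R] {s : Finset ι} {a b : ι → R} {d : R}
    (h : ∀ i ∈ s, d ∣ a i - b i) : d ∣ ∏ i ∈ s, a i - ∏ i ∈ s, b i := by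
  rw [← Ideal.mem_span_singleton, ← Ideal.Quotient.eq, map_prod, map_prod]
  exact Finset.prod_congr rfl fun i hi => Ideal.Quotient.eq.2 (Ideal.mem_span_singleton.2 (h i hi))

namespace PowerSeries

theorem C_dvd_iff_dvd_coeff {R : Type*} [Semiring R] (r : R) (φ : R⟦X⟧) :
    C r ∣ φ ↔ ∀ n, r ∣ coeff n φ := by
  refine ⟨fun ⟨ψ, hψ⟩ n => ⟨coeff n ψ, by rw [hψ, coeff_C_mul]⟩, fun h => ?_⟩
  choose c hc using h
  exact ⟨mk c, by ext n; rw [coeff_C_mul, coeff_mk, ← hc]⟩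

theorem coeff_eq_zero_of_rescale_neg_one_eq {R : Type*} [CommRing R] [IsAddTorsionFree R]
    {φ : R⟦X⟧} (hφ : rescale (-1) φ = φ) {n : ℕ} (hn : Odd n) : coeff n φ = 0 := by
  have h := congrArg (coeff n) hφ
  rwa [coeff_rescale, hn.neg_one_pow, neg_one_mul, neg_eq_self] at h

end PowerSeries

noncomputable def truncProd (k m : ℕ) : ℤ⟦X⟧ :=
  ∏ j ∈ Finset.range m, (1 - X ^ (k * (j + 1)))

theorem coeff_f (k n : ℕ) : coeff n (f k) = coeff n (truncProd k (n + 1)) :=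
  coeff_mk _ _

theorem X_pow_dvd_truncProd_sub_truncProd {k m m' : ℕ} (hk : k ≠ 0) (hm : m ≤ m') :
    X ^ m ∣ truncProd k m' - truncProd k m := by
  obtain ⟨d, rfl⟩ := Nat.exists_eq_add_of_le hm
  have htail : (X : ℤ⟦X⟧) ^ m ∣
      ∏ i ∈ Finset.range d, (1 - X ^ (k * (m + i + 1))) - ∏ _i ∈ Finset.range d, 1 :=
    dvd_prod_sub_prod fun i _ => by
      rw [sub_sub_cancel_left, dvd_neg]
      exact pow_dvd_pow _ (by nlinarith [Nat.one_le_iff_ne_zero.2 hk])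
  rw [Finset.prod_const_one] at htail
  rw [truncProd, truncProd, Finset.prod_range_add, ← mul_sub_one]
  exact htail.mul_left _

theorem X_pow_dvd_f_sub_truncProd {k : ℕ} (hk : k ≠ 0) (m : ℕ) : X ^ m ∣ f k - truncProd k m := by
  refine X_pow_dvd_iff.2 fun i hi => ?_
  have h := X_pow_dvd_iff.1 (X_pow_dvd_truncProd_sub_truncProd hk hi) i i.lt_add_one
  rw [map_sub] at h ⊢
  rw [coeff_f]
  linarith

theorem isUnit_f {k : ℕ} (hk : k ≠ 0) : IsUnit (f k) := by
  rw [isUnit_iff_constantCoeff, ← coeff_zero_eq_constantCoeff_apply, coeff_f]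
  simp [truncProd, hk]

theorem rescale_neg_one_f_of_even {k : ℕ} (hk : Even k) : rescale (-1) (f k) = f k := by
  ext n
  have hP : rescale (-1) (truncProd k (n + 1)) = truncProd k (n + 1) := by
    simp only [truncProd, map_prod, map_sub, map_one, map_pow, rescale_neg_one_X,
      (hk.mul_right _).neg_pow]
  rw [coeff_rescale, coeff_f, ← coeff_rescale, hP]

theorem two_dvd_truncProd_one_sq_sub (m : ℕ) : (2 : ℤ⟦X⟧) ∣ truncProd 1 m ^ 2 - truncProd 2 m := by
  simp only [truncProd, ← Finset.prod_pow, one_mul, mul_comm 2, pow_mul]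
  exact dvd_prod_sub_prod fun j _ => ⟨(X ^ (j + 1)) ^ 2 - X ^ (j + 1), by ring⟩

theorem two_dvd_f_one_sq_sub_f_two : (2 : ℤ⟦X⟧) ∣ f 1 ^ 2 - f 2 := by
  rw [← map_ofNat C 2, C_dvd_iff_dvd_coeff]
  intro n
  have htrunc :
      X ^ (n + 1) ∣ (f 1 ^ 2 - f 2) - (truncProd 1 (n + 1) ^ 2 - truncProd 2 (n + 1)) := by
    have h₁ := X_pow_dvd_f_sub_truncProd one_ne_zero (n + 1)
    have h₂ := X_pow_dvd_f_sub_truncProd two_ne_zero (n + 1)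
    rw [show (f 1 ^ 2 - f 2) - (truncProd 1 (n + 1) ^ 2 - truncProd 2 (n + 1)) =
      (f 1 - truncProd 1 (n + 1)) * (f 1 + truncProd 1 (n + 1)) - (f 2 - truncProd 2 (n + 1))
      by ring]
    exact dvd_sub (h₁.mul_right _) h₂
  have h := X_pow_dvd_iff.1 htrunc n n.lt_add_one
  rw [map_sub, sub_eq_zero] at h
  have h₂ := two_dvd_truncProd_one_sq_sub (n + 1)
  rw [← map_ofNat C 2, C_dvd_iff_dvd_coeff] at h₂
  exact h ▸ h₂ n

theorem eight_dvd_f_one_pow_eight_sub_f_two_pow_four : (8 : ℤ⟦X⟧) ∣ f 1 ^ 8 - f 2 ^ 4 := by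
  have h := dvd_sub_pow_of_dvd_sub (R := ℤ⟦X⟧) (p := 2)
    (by exact_mod_cast two_dvd_f_one_sq_sub_f_two) 2
  norm_num [← pow_mul] at h
  exact h

theorem p8_odd_cong (n : ℕ) : (8 : ℤ) ∣ p8 (2 * n + 1) := by
  have hf₂ : IsUnit (f 2 ^ 4) := (isUnit_f two_ne_zero).pow 4
  obtain ⟨T, hT⟩ : (8 : ℤ⟦X⟧) ∣ (f 1 ^ 8)⁻¹ʳ - (f 2 ^ 4)⁻¹ʳ := by
    rw [Ring.inverse_sub_inverse (iff_of_true ((isUnit_f one_ne_zero).pow 8) hf₂), ← neg_sub]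
    exact ((dvd_neg.2 eight_dvd_f_one_pow_eight_sub_f_two_pow_four).mul_left _).mul_right _
  have hodd : coeff (2 * n + 1) (f 2 ^ 4)⁻¹ʳ = 0 := by
    refine coeff_eq_zero_of_rescale_neg_one_eq ?_ (odd_two_mul_add_one n)
    rw [map_ringInverse _ hf₂, map_pow, rescale_neg_one_f_of_even even_two]
  rw [p8, sub_eq_iff_eq_add.1 hT, map_add, hodd, add_zero, ← map_ofNat C 8, coeff_C_mul]
  exact dvd_mul_right _ _
end

section
/- Define the doubly-indexed integers m_{j,k} (j,k ≥ 1) by: m_{1,1}=8, m_{1,k}=0 for k≥2; m_{2,1}=1, m_{2,2}=128, m_{2,k}=0 for k≥3; m_{j,1}=0 for j≥3; and m_{j,k} = 16 m_{j-1,k-1} + m_{j-2,k-1} for j≥3, k≥2. Then for all j,k ≥ 1 with k ≤ j ≤ 2k, the 2-adic valuation satisfies ν_2(m_{j,k}) ≥ 4(2k−j)−1. -/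
/-- The matrix `m j k` defined by the recursion in the paper. Rows and columns are
indexed from 1; values at index 0 are irrelevant and set to 0. -/
def m : ℕ → ℕ → ℤ
  | 0, _ => 0
  | 1, 1 => 8
  | 1, _ => 0
  | 2, 1 => 1
  | 2, 2 => 128
  | 2, _ => 0
  | j + 3, k + 2 => 16 * m (j + 2) (k + 1) + m (j + 1) (k + 1)
  | _ + 3, _ => 0

lemma m_eq_zero (j : ℕ) : ∀ k, j < k → m j k = 0 := by
  induction j using Nat.strong_induction_on with
  | _ j ih =>
    match j with
    | 0 => intro k _; rfl
    | 1 => intro k hk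
           match k, hk with
           | (n+2), _ => rfl
    | 2 => intro k hk
           match k, hk with
           | (n+3), _ => rfl
    | (j+3) =>
      intro k hk
      match k, hk with
      | (k'+2), _ =>
        have heq : m (j+3) (k'+2) = 16 * m (j+2) (k'+1) + m (j+1) (k'+1) := rfl
        rw [heq, ih (j+2) (by omega) (k'+1) (by omega),
            ih (j+1) (by omega) (k'+1) (by omega)]
        ring

theorem m_two_adic_valuation (j k : ℕ) (hk : 1 ≤ k) (hkj : k ≤ j) (hj : j ≤ 2 * k) :
    (2 : ℤ) ^ (4 * (2 * k - j) - 1) ∣ m j k := by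
  induction j using Nat.strong_induction_on generalizing k with
  | _ j ih =>
    match j, hkj with
    | 0, h => omega
    | 1, _ =>
      match k, hk, hj with
      | 1, _, _ => decide
    | 2, _ =>
      match k, hk, hj with
      | 1, _, _ => simp
      | 2, _, _ => decide
    | (j+3), _ =>
      match k, hk, hj with
      | (k'+2), _, _ =>
        have heq : m (j+3) (k'+2) = 16 * m (j+2) (k'+1) + m (j+1) (k'+1) := rfl
        rw [heq]
        apply dvd_add
        · -- term 16 * m (j+2) (k'+1)
          rcases Nat.lt_or_ge (j+3) (2*(k'+2)) with hlt | hge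
          · have h1 := ih (j+2) (by omega) (k'+1) (by omega) (by omega) (by omega)
            have h16 : (16 : ℤ) = 2^4 := by norm_num
            have : (2:ℤ)^(4 * (2 * (k'+1) - (j+2)) - 1 + 4) ∣
                16 * m (j+2) (k'+1) := by
              rw [pow_add, h16, mul_comm ((2:ℤ)^_)]
              exact mul_dvd_mul_left _ h1
            exact dvd_trans (pow_dvd_pow 2 (by omega)) this
          · have : 4 * (2 * (k'+2) - (j+3)) - 1 = 0 := by omega
            rw [this, pow_zero]
            exact one_dvd _
        · -- term m (j+1) (k'+1)
          rcases Nat.lt_or_ge (k'+2) (j+3) with hlt | hge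
          · have h2 := ih (j+1) (by omega) (k'+1) (by omega) (by omega) (by omega)
            have : 4 * (2 * (k'+1) - (j+1)) - 1 = 4 * (2 * (k'+2) - (j+3)) - 1 := by
              omega
            rwa [this] at h2
          · have hz : m (j+1) (k'+1) = 0 := m_eq_zero (j+1) (k'+1) (by omega)
            rw [hz]
            exact dvd_zero _
end
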